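/- Let $\delta > 0$, $\Delta \geq 2\delta$ and $I > 0$. Then $\min_{p \in [0,1]} \frac{((1-p)\delta + p\Delta)^2}{pI} = \frac{4\delta(\Delta - \delta)}{I}$, achieved at $p^* = \delta/(\Delta - \delta)$. -/

import Mathlib

/-!
Writing the mixed gap as `δ + p (Δ - δ)`, AM-GM gives `(δ + p (Δ - δ))² ≥ 4 δ · p (Δ - δ)`,
so the ratio is at least `4 δ (Δ - δ) / I`, with equality exactly when `p (Δ - δ) = δ`.
Since `Δ ≥ 2δ`, this optimum `p* = δ / (Δ - δ)` lies in `(0, 1]`.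
-/

/-- `p` is the probability of the second action. At `p = 0` the division yields the junk value `0`
rather than `+∞`, so only `p ∈ (0, 1]` is meaningful. -/
noncomputable def infoRatio (δ Δ I p : ℝ) : ℝ :=
  ((1 - p) * δ + p * Δ) ^ 2 / (p * I)

lemma four_mul_div_le_infoRatio (δ Δ : ℝ) {I p : ℝ} (hp : 0 < p) (hI : 0 < I) :
    4 * δ * (Δ - δ) / I ≤ infoRatio δ Δ I p := by
  have amgm := four_mul_le_sq_add δ (p * (Δ - δ))
  rw [infoRatio, div_le_div_iff₀ hI (mul_pos hp hI)]
  calc 4 * δ * (Δ - δ) * (p * I) = 4 * δ * (p * (Δ - δ)) * I := by ring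
    _ ≤ (δ + p * (Δ - δ)) ^ 2 * I := by gcongr
    _ = ((1 - p) * δ + p * Δ) ^ 2 * I := by ring

lemma infoRatio_div_sub {δ Δ I : ℝ} (hδ : δ ≠ 0) (hΔδ : Δ - δ ≠ 0) (hI : I ≠ 0) :
    infoRatio δ Δ I (δ / (Δ - δ)) = 4 * δ * (Δ - δ) / I := by
  rw [infoRatio]
  field_simp
  ring

lemma div_sub_mem_Ioc {δ Δ : ℝ} (hδ : 0 < δ) (hΔ : 2 * δ ≤ Δ) :
    δ / (Δ - δ) ∈ Set.Ioc (0 : ℝ) 1 := by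
  have hΔδ : 0 < Δ - δ := by linarith
  exact ⟨div_pos hδ hΔδ, (div_le_one hΔδ).mpr (by linarith)⟩

theorem two_action_ids_zero_info_first (δ Δ I : ℝ)
    (hδ : 0 < δ) (hΔ : 2 * δ ≤ Δ) (hI : 0 < I)
    (f : ℝ → ℝ)
    (hf : ∀ p, f p = ((1 - p) * δ + p * Δ)^2 / (p * I)) :
    f (δ / (Δ - δ)) = 4 * δ * (Δ - δ) / I ∧
      δ / (Δ - δ) ∈ Set.Ioc (0:ℝ) 1 ∧
      ∀ p ∈ Set.Ioc (0:ℝ) 1, 4 * δ * (Δ - δ) / I ≤ f p := by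
  obtain rfl : f = infoRatio δ Δ I := funext hf
  exact ⟨infoRatio_div_sub hδ.ne' (by linarith) hI.ne', div_sub_mem_Ioc hδ hΔ,
    fun p hp => four_mul_div_le_infoRatio δ Δ hp.1 hI⟩
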